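/- arXiv:1210.5606 — 3 statements merged into one kernel-verified Lean document; each statement's English description precedes it below -/
import Mathlib

section
/- Let ξ(λ) = Σ_{d=-1}^{g} ξ_d λ^d be as above with ξ_d = -(conjugate transpose of ξ_{g-1-d}). Then for every λ on the unit circle, λ^{-g}·(-λ det ξ(λ)) ≤ 0, i.e. λ^{-g} a(λ) is real and nonpositive for |λ| = 1. -/
/-!
On the unit circle `conj λ = λ⁻¹`, so the symmetry `ξ_d = -ξ_{g-1-d}ᴴ` turns into
`M(λ)ᴴ = -λ^{1-g} M(λ)` for `M(λ) = ξ(λ)`. For a traceless `2 × 2` matrix with this twisted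
skew-Hermitian property, `λ^{1-g} det M = |M₀₀|² + |M₁₀|²`, and `λ^{-g} a(λ) = -λ^{1-g} det M`.
-/

open Complex Matrix

theorem mul_det_eq_normSq_of_conjTranspose_eq_neg_smul {M : Matrix (Fin 2) (Fin 2) ℂ} {μ : ℂ}
    (hM : Mᴴ = -μ • M) (htr : M.trace = 0) :
    μ * M.det = ((normSq (M 0 0) + normSq (M 1 0) : ℝ) : ℂ) := by
  have h00 : (starRingEnd ℂ) (M 0 0) = -μ * M 0 0 := by
    simpa [conjTranspose_apply] using congrFun (congrFun hM 0) 0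
  have h10 : (starRingEnd ℂ) (M 1 0) = -μ * M 0 1 := by
    simpa [conjTranspose_apply] using congrFun (congrFun hM 0) 1
  have h11 : M 1 1 = -M 0 0 := by
    rw [trace_fin_two] at htr
    linear_combination htr
  rw [det_fin_two, h11]
  push_cast
  rw [← mul_conj, ← mul_conj, h00, h10]
  ring

theorem conjTranspose_sum_zpow_smul {ι : Type*} [Fintype ι] {n : ℕ} {k : ℤ}
    {ξ : ℕ → Matrix ι ι ℂ} (hsym : ∀ d ≤ n, ξ d = -(ξ (n - d))ᴴ) {l : ℂ} (hl : ‖l‖ = 1) :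
    (∑ d ∈ Finset.range (n + 1), l ^ ((d : ℤ) + k) • ξ d)ᴴ =
      -(l ^ (-(n : ℤ) - 2 * k)) • ∑ d ∈ Finset.range (n + 1), l ^ ((d : ℤ) + k) • ξ d := by
  have hl0 : l ≠ 0 := norm_ne_zero_iff.mp (by rw [hl]; exact one_ne_zero)
  rw [conjTranspose_sum, Finset.smul_sum]
  conv_rhs => rw [← Finset.sum_range_reflect]
  refine Finset.sum_congr rfl fun d hd => ?_
  have hdn : d ≤ n := Nat.lt_succ_iff.mp (Finset.mem_range.mp hd)
  have hconj : star (l ^ ((d : ℤ) + k)) = l ^ (-(n : ℤ) - 2 * k) * l ^ (((n - d : ℕ) : ℤ) + k) := by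
    rw [RCLike.star_def, map_zpow₀, ← inv_eq_conj hl, _root_.inv_zpow', ← zpow_add₀ hl0]
    congr 1
    omega
  rw [conjTranspose_smul, hsym d hdn, conjTranspose_neg, conjTranspose_conjTranspose, hconj,
    show n + 1 - 1 - d = n - d by omega, smul_smul]
  module

theorem stmt_1_general (g : ℕ) (ξ : ℕ → Matrix (Fin 2) (Fin 2) ℂ)
    (htr : ∀ d, (ξ d).trace = 0)
    (hsym : ∀ d ≤ g + 1, ξ d = -(ξ (g + 1 - d))ᴴ)
    (a : ℂ → ℂ)
    (ha : ∀ l : ℂ, l ≠ 0 →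
      a l = -l * (∑ d ∈ Finset.range (g + 2), (l ^ ((d : ℤ) - 1)) • ξ d).det) :
    ∀ l : ℂ, ‖l‖ = 1 →
      ∃ r : ℝ, r ≤ 0 ∧ l ^ (-(g : ℤ)) * a l = (r : ℂ) := by
  intro l hl
  have hl0 : l ≠ 0 := norm_ne_zero_iff.mp (by rw [hl]; exact one_ne_zero)
  set M := ∑ d ∈ Finset.range (g + 2), (l ^ ((d : ℤ) - 1)) • ξ d
  have hM : Mᴴ = -(l ^ (1 - (g : ℤ))) • M := by
    have := conjTranspose_sum_zpow_smul (k := -1) hsym hl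
    push_cast at this
    convert this using 3 <;> ring_nf
  have hdet := mul_det_eq_normSq_of_conjTranspose_eq_neg_smul hM
    (by simp [M, trace_sum, trace_smul, htr])
  refine ⟨-(normSq (M 0 0) + normSq (M 1 0)),
    by linarith [normSq_nonneg (M 0 0), normSq_nonneg (M 1 0)], ?_⟩
  rw [ha l hl0, ofReal_neg, ← hdet, show (1 : ℤ) - g = -g + 1 by ring, zpow_add_one₀ hl0]
  ring

/-- for `|λ| = 1`, `λ^{-g} a(λ)` is real and nonpositive. -/
theorem stmt_1 (g : ℕ) (hg : 1 ≤ g) (ξ : ℕ → Matrix (Fin 2) (Fin 2) ℂ)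
    (htr : ∀ d, (ξ d).trace = 0)
    (hsym : ∀ d ≤ g + 1, ξ d = -(ξ (g + 1 - d))ᴴ)
    (a : ℂ → ℂ)
    (ha : ∀ l : ℂ, l ≠ 0 →
      a l = -l * (∑ d ∈ Finset.range (g + 2), (l ^ ((d : ℤ) - 1)) • ξ d).det) :
    ∀ l : ℂ, ‖l‖ = 1 →
      ∃ r : ℝ, r ≤ 0 ∧ l ^ (-(g : ℤ)) * a l = (r : ℂ) :=
  stmt_1_general g ξ htr hsym a ha
end

section
/- Let ω : ℂ → ℝ solve Abresch's system, i.e. Δω + sinh ω cosh ω = 0 and ω_{xy} = ω_x ω_y tanh ω, and suppose ω arises from elliptic functions f(x) = -ω_x/cosh ω and g(y) = -ω_y/cosh ω satisfying -(f')² = f⁴ + (1+c-d)f² + c and -(g')² = g⁴ + (1+d-c)g² + d with sinh ω = (f' + g')/(1+f²+g²). Then ω satisfies the third-order relation ω_{zzz} - 2ω_z³ = -(1/4)ω_{z̄} + (1/2)(c-d)ω_z. -/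
open Complex

noncomputable def pdx (f : ℂ → ℂ) (z : ℂ) : ℂ := fderiv ℝ f z 1
noncomputable def pdy (f : ℂ → ℂ) (z : ℂ) : ℂ := fderiv ℝ f z Complex.I
noncomputable def pdz (f : ℂ → ℂ) (z : ℂ) : ℂ := (pdx f z - Complex.I * pdy f z) / 2
noncomputable def pdzbar (f : ℂ → ℂ) (z : ℂ) : ℂ := (pdx f z + Complex.I * pdy f z) / 2
noncomputable def lap (f : ℂ → ℂ) (z : ℂ) : ℂ := pdx (pdx f) z + pdy (pdy f) z

lemma pd_smooth {u : ℂ → ℂ} (hu : ContDiff ℝ (⊤ : ℕ∞) u) (v : ℂ) :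
    ContDiff ℝ (⊤ : ℕ∞) (fun z => fderiv ℝ u z v) :=
  (hu.fderiv_right (mod_cast le_top)).clm_apply contDiff_const

lemma pdx_smooth {u : ℂ → ℂ} (hu : ContDiff ℝ (⊤ : ℕ∞) u) : ContDiff ℝ (⊤ : ℕ∞) (pdx u) :=
  pd_smooth hu 1

lemma pdy_smooth {u : ℂ → ℂ} (hu : ContDiff ℝ (⊤ : ℕ∞) u) : ContDiff ℝ (⊤ : ℕ∞) (pdy u) :=
  pd_smooth hu Complex.I

lemma pd_comm {u : ℂ → ℂ} (hu : ContDiff ℝ (⊤ : ℕ∞) u) (z v w : ℂ) :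
    fderiv ℝ (fun t => fderiv ℝ u t v) z w = fderiv ℝ (fun t => fderiv ℝ u t w) z v := by
  have hd : Differentiable ℝ (fderiv ℝ u) :=
    (show ContDiff ℝ (⊤ : ℕ∞) (fderiv ℝ u) from hu.fderiv_right (mod_cast le_top)).differentiable (by simp)
  have hsymm := second_derivative_symmetric (f := u) (f' := fderiv ℝ u)
      (f'' := fderiv ℝ (fderiv ℝ u) z)
      (fun y => ((hu.differentiable (by simp)) y).hasFDerivAt) ((hd z).hasFDerivAt)
  have e : ∀ a : ℂ, fderiv ℝ (fun t => fderiv ℝ u t a) z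
      = (fderiv ℝ (fderiv ℝ u) z).flip a := by
    intro a
    rw [fderiv_clm_apply (hd z) (differentiableAt_const a)]
    ext b
    simp
  rw [e v, e w]
  exact hsymm w v

lemma fderiv_sinh_comp {u : ℂ → ℂ} {z : ℂ} (hu : DifferentiableAt ℝ u z) (v : ℂ) :
    fderiv ℝ (fun w => Complex.sinh (u w)) z v = Complex.cosh (u z) * fderiv ℝ u z v := by
  have h := (Complex.hasDerivAt_sinh (u z)).comp_hasFDerivAt z hu.hasFDerivAt
  rw [show (fun w => Complex.sinh (u w)) = Complex.sinh ∘ u from rfl, h.fderiv]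
  simp

lemma fderiv_cosh_comp {u : ℂ → ℂ} {z : ℂ} (hu : DifferentiableAt ℝ u z) (v : ℂ) :
    fderiv ℝ (fun w => Complex.cosh (u w)) z v = Complex.sinh (u z) * fderiv ℝ u z v := by
  have h := (Complex.hasDerivAt_cosh (u z)).comp_hasFDerivAt z hu.hasFDerivAt
  rw [show (fun w => Complex.cosh (u w)) = Complex.cosh ∘ u from rfl, h.fderiv]
  simp

lemma diff_sinh_comp {u : ℂ → ℂ} {z : ℂ} (hu : DifferentiableAt ℝ u z) :
    DifferentiableAt ℝ (fun w => Complex.sinh (u w)) z :=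
  ((Complex.hasDerivAt_sinh (u z)).comp_hasFDerivAt z hu.hasFDerivAt).differentiableAt

lemma diff_cosh_comp {u : ℂ → ℂ} {z : ℂ} (hu : DifferentiableAt ℝ u z) :
    DifferentiableAt ℝ (fun w => Complex.cosh (u w)) z :=
  ((Complex.hasDerivAt_cosh (u z)).comp_hasFDerivAt z hu.hasFDerivAt).differentiableAt

lemma fderiv_mul_apply' {u v : ℂ → ℂ} {z w : ℂ}
    (hu : DifferentiableAt ℝ u z) (hv : DifferentiableAt ℝ v z) :
    fderiv ℝ (fun t => u t * v t) z w = fderiv ℝ u z w * v z + u z * fderiv ℝ v z w := by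
  rw [fderiv_fun_mul hu hv]
  simp [smul_eq_mul]
  ring

lemma hasF_re (f : ℝ → ℝ) (z : ℂ) (hf : DifferentiableAt ℝ f z.re) :
    HasFDerivAt (fun w : ℂ => ((f w.re : ℝ) : ℂ))
      (Complex.ofRealCLM.comp ((deriv f z.re) • Complex.reCLM)) z :=
  Complex.ofRealCLM.hasFDerivAt.comp z
    (hf.hasDerivAt.comp_hasFDerivAt z Complex.reCLM.hasFDerivAt)

lemma hasF_im (g : ℝ → ℝ) (z : ℂ) (hg : DifferentiableAt ℝ g z.im) :
    HasFDerivAt (fun w : ℂ => ((g w.im : ℝ) : ℂ))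
      (Complex.ofRealCLM.comp ((deriv g z.im) • Complex.imCLM)) z :=
  Complex.ofRealCLM.hasFDerivAt.comp z
    (hg.hasDerivAt.comp_hasFDerivAt z Complex.imCLM.hasFDerivAt)

lemma fderiv_re_apply (f : ℝ → ℝ) (z v : ℂ) (hf : DifferentiableAt ℝ f z.re) :
    fderiv ℝ (fun w : ℂ => ((f w.re : ℝ) : ℂ)) z v = ((deriv f z.re : ℝ) : ℂ) * ((v.re : ℝ) : ℂ) := by
  rw [(hasF_re f z hf).fderiv]
  simp [smul_eq_mul]

lemma fderiv_im_apply (g : ℝ → ℝ) (z v : ℂ) (hg : DifferentiableAt ℝ g z.im) :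
    fderiv ℝ (fun w : ℂ => ((g w.im : ℝ) : ℂ)) z v = ((deriv g z.im : ℝ) : ℂ) * ((v.im : ℝ) : ℂ) := by
  rw [(hasF_im g z hg).fderiv]
  simp [smul_eq_mul]

lemma comb2 {u1 u2 : ℂ → ℂ} {z v : ℂ}
    (h1 : DifferentiableAt ℝ u1 z) (h2 : DifferentiableAt ℝ u2 z) :
    fderiv ℝ (fun t => (u1 t - Complex.I * u2 t) / 2) z v
      = (fderiv ℝ u1 z v - Complex.I * fderiv ℝ u2 z v) / 2 := by
  simp only [div_eq_mul_inv]
  have H := (h1.hasFDerivAt.sub (h2.hasFDerivAt.const_mul Complex.I)).mul_const ((2:ℂ)⁻¹)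
  rw [HasFDerivAt.fderiv (f := fun t => (u1 t - Complex.I * u2 t) * 2⁻¹) H]
  simp [smul_eq_mul]
  ring

lemma comb4 {u1 u2 u3 u4 : ℂ → ℂ} {z v : ℂ}
    (h1 : DifferentiableAt ℝ u1 z) (h2 : DifferentiableAt ℝ u2 z)
    (h3 : DifferentiableAt ℝ u3 z) (h4 : DifferentiableAt ℝ u4 z) :
    fderiv ℝ (fun t => (u1 t - Complex.I * u2 t - Complex.I * u3 t - u4 t) / 4) z v
      = (fderiv ℝ u1 z v - Complex.I * fderiv ℝ u2 z v
          - Complex.I * fderiv ℝ u3 z v - fderiv ℝ u4 z v) / 4 := by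
  simp only [div_eq_mul_inv]
  have H := ((((h1.hasFDerivAt.sub (h2.hasFDerivAt.const_mul Complex.I)).sub
      (h3.hasFDerivAt.const_mul Complex.I)).sub h4.hasFDerivAt)).mul_const ((4:ℂ)⁻¹)
  rw [HasFDerivAt.fderiv (f := fun t => (u1 t - Complex.I * u2 t - Complex.I * u3 t - u4 t) * 4⁻¹) H]
  simp [smul_eq_mul]
  ring

/-- a solution of Abresch's system coming from the elliptic
functions `f`, `g` satisfies `ω_{zzz} - 2ω_z³ = -¼ ω_{z̄} + ½(c-d) ω_z`. -/
theorem stmt_14 (ω : ℂ → ℂ) (f g : ℝ → ℝ) (c d : ℝ)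
    (hc : c < 0) (hd : d < 0)
    (hω : ContDiff ℝ (⊤ : ℕ∞) ω) (hreal : ∀ z, (ω z).im = 0)
    (hf : ContDiff ℝ (⊤ : ℕ∞) f) (hg : ContDiff ℝ (⊤ : ℕ∞) g)
    (hsg : ∀ z, lap ω z + Complex.sinh (ω z) * Complex.cosh (ω z) = 0)
    (habresch : ∀ z, pdy (pdx ω) z = pdx ω z * pdy ω z * Complex.tanh (ω z))
    (hfdef : ∀ z : ℂ, (f z.re : ℂ) = -pdx ω z / Complex.cosh (ω z))
    (hgdef : ∀ z : ℂ, (g z.im : ℂ) = -pdy ω z / Complex.cosh (ω z))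
    (hfode : ∀ x : ℝ, -(deriv f x) ^ 2 = (f x) ^ 4 + (1 + c - d) * (f x) ^ 2 + c)
    (hgode : ∀ y : ℝ, -(deriv g y) ^ 2 = (g y) ^ 4 + (1 + d - c) * (g y) ^ 2 + d)
    (hsinh : ∀ z : ℂ, Complex.sinh (ω z)
        = ((deriv f z.re + deriv g z.im : ℝ) : ℂ)
          / (1 + (f z.re : ℂ) ^ 2 + (g z.im : ℂ) ^ 2)) :
    ∀ z, pdz (pdz (pdz ω)) z - 2 * (pdz ω z) ^ 3
      = -(1 / 4) * pdzbar ω z + (1 / 2) * ((c : ℂ) - (d : ℂ)) * pdz ω z := by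
  intro z
  have dω : Differentiable ℝ ω := hω.differentiable (by simp)
  have hpx : ContDiff ℝ (⊤ : ℕ∞) (pdx ω) := pdx_smooth hω
  have hpy : ContDiff ℝ (⊤ : ℕ∞) (pdy ω) := pdy_smooth hω
  have hpxx : ContDiff ℝ (⊤ : ℕ∞) (pdx (pdx ω)) := pdx_smooth hpx
  have hpxy : ContDiff ℝ (⊤ : ℕ∞) (pdx (pdy ω)) := pdx_smooth hpy
  have hpyx : ContDiff ℝ (⊤ : ℕ∞) (pdy (pdx ω)) := pdy_smooth hpx
  have hpyy : ContDiff ℝ (⊤ : ℕ∞) (pdy (pdy ω)) := pdy_smooth hpy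
  have dd : ∀ (u : ℂ → ℂ), ContDiff ℝ (⊤ : ℕ∞) u → ∀ w, DifferentiableAt ℝ u w :=
    fun u hu w => (hu.differentiable (by simp)) w
  have hcne : ∀ w, Complex.cosh (ω w) ≠ 0 := by
    intro w
    have h1 : ω w = (((ω w).re : ℝ) : ℂ) := by
      apply Complex.ext <;> simp [hreal w]
    rw [h1, ← Complex.ofReal_cosh]
    exact_mod_cast (Real.cosh_pos ((ω w).re)).ne'
  -- function-level identities
  have hpfun : ∀ w, pdx ω w = -(((f w.re : ℝ) : ℂ) * Complex.cosh (ω w)) := by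
    intro w
    have h := hfdef w
    field_simp [hcne w] at h
    linear_combination h
  have hqfun : ∀ w, pdy ω w = -(((g w.im : ℝ) : ℂ) * Complex.cosh (ω w)) := by
    intro w
    have h := hgdef w
    field_simp [hcne w] at h
    linear_combination h
  have hlapfun : ∀ w, pdx (pdx ω) w + pdy (pdy ω) w
      = -(Complex.sinh (ω w) * Complex.cosh (ω w)) := by
    intro w
    have h := hsg w
    have hl : lap ω w = pdx (pdx ω) w + pdy (pdy ω) w := rfl
    linear_combination h - hl
  have habfun : ∀ w, Complex.cosh (ω w) * pdy (pdx ω) w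
      = pdx ω w * pdy ω w * Complex.sinh (ω w) := by
    intro w
    have h := habresch w
    rw [Complex.tanh_eq_sinh_div_cosh] at h
    field_simp [hcne w] at h
    linear_combination h
  -- commutation
  have hcommω : ∀ w, pdx (pdy ω) w = pdy (pdx ω) w := fun w => pd_comm hω w Complex.I 1
  have hcommfun : pdx (pdy ω) = pdy (pdx ω) := funext hcommω
  have comm_xx : pdy (pdx (pdx ω)) z = pdx (pdy (pdx ω)) z := pd_comm hpx z 1 Complex.I
  have hXcan1 : pdy (pdx (pdy ω)) z = pdx (pdy (pdy ω)) z := pd_comm hpy z 1 Complex.I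
  have hXcan2 : pdy (pdy (pdx ω)) z = pdx (pdy (pdy ω)) z := by
    rw [← hcommfun]; exact hXcan1
  have hxxy : pdx (pdx (pdy ω)) z = pdx (pdy (pdx ω)) z := by rw [hcommfun]
  -- atoms rfl
  have r1 : fderiv ℝ ω z 1 = pdx ω z := rfl
  have rI : fderiv ℝ ω z Complex.I = pdy ω z := rfl
  -- second derivatives at z
  have dcast_f : ∀ w, DifferentiableAt ℝ (fun t : ℂ => ((f t.re : ℝ) : ℂ)) w :=
    fun w => (hasF_re f w ((hf.differentiable (by simp)).differentiableAt)).differentiableAt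
  have dcast_g : ∀ w, DifferentiableAt ℝ (fun t : ℂ => ((g t.im : ℝ) : ℂ)) w :=
    fun w => (hasF_im g w ((hg.differentiable (by simp)).differentiableAt)).differentiableAt
  have hxxz : pdx (pdx ω) z = -(((deriv f z.re : ℝ) : ℂ) * Complex.cosh (ω z))
      + ((f z.re : ℝ) : ℂ) ^ 2 * Complex.sinh (ω z) * Complex.cosh (ω z) := by
    show fderiv ℝ (pdx ω) z 1 = _
    rw [show pdx ω = fun w => -(((f w.re : ℝ) : ℂ) * Complex.cosh (ω w)) from funext hpfun]
    rw [fderiv_fun_neg]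
    simp only [ContinuousLinearMap.neg_apply]
    rw [fderiv_mul_apply' (dcast_f z) (diff_cosh_comp (dω z)),
      fderiv_re_apply f z 1 ((hf.differentiable (by simp)).differentiableAt),
      fderiv_cosh_comp (dω z), r1]
    simp only [Complex.one_re, Complex.ofReal_one, mul_one]
    linear_combination (-(((f z.re : ℝ) : ℂ) * Complex.sinh (ω z))) * hpfun z
  have hyyz : pdy (pdy ω) z = -(((deriv g z.im : ℝ) : ℂ) * Complex.cosh (ω z))
      + ((g z.im : ℝ) : ℂ) ^ 2 * Complex.sinh (ω z) * Complex.cosh (ω z) := by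
    show fderiv ℝ (pdy ω) z Complex.I = _
    rw [show pdy ω = fun w => -(((g w.im : ℝ) : ℂ) * Complex.cosh (ω w)) from funext hqfun]
    rw [fderiv_fun_neg]
    simp only [ContinuousLinearMap.neg_apply]
    rw [fderiv_mul_apply' (dcast_g z) (diff_cosh_comp (dω z)),
      fderiv_im_apply g z Complex.I ((hg.differentiable (by simp)).differentiableAt),
      fderiv_cosh_comp (dω z), rI]
    simp only [Complex.I_im, Complex.ofReal_one, mul_one]
    linear_combination (-(((g z.im : ℝ) : ℂ) * Complex.sinh (ω z))) * hqfun z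
  -- third derivatives from the Laplace equation
  have hAX : pdx (pdx (pdx ω)) z + pdx (pdy (pdy ω)) z
      = -((Complex.cosh (ω z) ^ 2 + Complex.sinh (ω z) ^ 2) * pdx ω z) := by
    have e2 : fderiv ℝ (fun w => pdx (pdx ω) w + pdy (pdy ω) w) z 1
        = fderiv ℝ (fun w => -(Complex.sinh (ω w) * Complex.cosh (ω w))) z 1 := by
      rw [show (fun w => pdx (pdx ω) w + pdy (pdy ω) w)
        = fun w => -(Complex.sinh (ω w) * Complex.cosh (ω w)) from funext hlapfun]
    rw [fderiv_fun_add (dd _ hpxx z) (dd _ hpyy z)] at e2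
    rw [fderiv_fun_neg] at e2
    simp only [ContinuousLinearMap.add_apply, ContinuousLinearMap.neg_apply] at e2
    rw [fderiv_mul_apply' (diff_sinh_comp (dω z)) (diff_cosh_comp (dω z)),
      fderiv_sinh_comp (dω z), fderiv_cosh_comp (dω z), r1] at e2
    have l1 : fderiv ℝ (pdx (pdx ω)) z 1 = pdx (pdx (pdx ω)) z := rfl
    have l2 : fderiv ℝ (pdy (pdy ω)) z 1 = pdx (pdy (pdy ω)) z := rfl
    rw [l1, l2] at e2
    linear_combination e2
  have hDY : pdx (pdy (pdx ω)) z + pdy (pdy (pdy ω)) z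
      = -((Complex.cosh (ω z) ^ 2 + Complex.sinh (ω z) ^ 2) * pdy ω z) := by
    have e2 : fderiv ℝ (fun w => pdx (pdx ω) w + pdy (pdy ω) w) z Complex.I
        = fderiv ℝ (fun w => -(Complex.sinh (ω w) * Complex.cosh (ω w))) z Complex.I := by
      rw [show (fun w => pdx (pdx ω) w + pdy (pdy ω) w)
        = fun w => -(Complex.sinh (ω w) * Complex.cosh (ω w)) from funext hlapfun]
    rw [fderiv_fun_add (dd _ hpxx z) (dd _ hpyy z)] at e2
    rw [fderiv_fun_neg] at e2
    simp only [ContinuousLinearMap.add_apply, ContinuousLinearMap.neg_apply] at e2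
    rw [fderiv_mul_apply' (diff_sinh_comp (dω z)) (diff_cosh_comp (dω z)),
      fderiv_sinh_comp (dω z), fderiv_cosh_comp (dω z), rI] at e2
    have l1 : fderiv ℝ (pdx (pdx ω)) z Complex.I = pdy (pdx (pdx ω)) z := rfl
    have l2 : fderiv ℝ (pdy (pdy ω)) z Complex.I = pdy (pdy (pdy ω)) z := rfl
    rw [l1, l2, comm_xx] at e2
    linear_combination e2
  -- third derivatives from the Abresch equation
  have hXrel : Complex.cosh (ω z) * pdx (pdy (pdy ω)) z
      = pdx ω z * pdy (pdy ω) z * Complex.sinh (ω z)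
        + pdx ω z * (pdy ω z) ^ 2 * Complex.cosh (ω z) := by
    have e : fderiv ℝ (fun w => Complex.cosh (ω w) * pdy (pdx ω) w) z Complex.I
        = fderiv ℝ (fun w => pdx ω w * pdy ω w * Complex.sinh (ω w)) z Complex.I := by
      rw [show (fun w => Complex.cosh (ω w) * pdy (pdx ω) w)
        = fun w => pdx ω w * pdy ω w * Complex.sinh (ω w) from funext habfun]
    rw [fderiv_mul_apply' (diff_cosh_comp (dω z)) (dd _ hpyx z),
      fderiv_cosh_comp (dω z),
      fderiv_mul_apply' (u := fun t => pdx ω t * pdy ω t) ((dd _ hpx z).mul (dd _ hpy z)) (diff_sinh_comp (dω z)),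
      fderiv_mul_apply' (dd _ hpx z) (dd _ hpy z),
      fderiv_sinh_comp (dω z), rI] at e
    have l1 : fderiv ℝ (pdy (pdx ω)) z Complex.I = pdy (pdy (pdx ω)) z := rfl
    have l2 : fderiv ℝ (pdx ω) z Complex.I = pdy (pdx ω) z := rfl
    have l3 : fderiv ℝ (pdy ω) z Complex.I = pdy (pdy ω) z := rfl
    rw [l1, l2, l3] at e
    linear_combination e - Complex.cosh (ω z) * hXcan2
  have hYrel : Complex.cosh (ω z) * pdx (pdy (pdx ω)) z
      = pdx (pdx ω) z * pdy ω z * Complex.sinh (ω z)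
        + (pdx ω z) ^ 2 * pdy ω z * Complex.cosh (ω z) := by
    have e : fderiv ℝ (fun w => Complex.cosh (ω w) * pdy (pdx ω) w) z 1
        = fderiv ℝ (fun w => pdx ω w * pdy ω w * Complex.sinh (ω w)) z 1 := by
      rw [show (fun w => Complex.cosh (ω w) * pdy (pdx ω) w)
        = fun w => pdx ω w * pdy ω w * Complex.sinh (ω w) from funext habfun]
    rw [fderiv_mul_apply' (diff_cosh_comp (dω z)) (dd _ hpyx z),
      fderiv_cosh_comp (dω z),
      fderiv_mul_apply' (u := fun t => pdx ω t * pdy ω t) ((dd _ hpx z).mul (dd _ hpy z)) (diff_sinh_comp (dω z)),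
      fderiv_mul_apply' (dd _ hpx z) (dd _ hpy z),
      fderiv_sinh_comp (dω z), r1] at e
    have l1 : fderiv ℝ (pdy (pdx ω)) z 1 = pdx (pdy (pdx ω)) z := rfl
    have l2 : fderiv ℝ (pdx ω) z 1 = pdx (pdx ω) z := rfl
    have l3 : fderiv ℝ (pdy ω) z 1 = pdx (pdy ω) z := rfl
    rw [l1, l2, l3] at e
    linear_combination e + pdx ω z * Complex.sinh (ω z) * hcommω z
  -- clean forms of X and Y
  have hXv : pdx (pdy (pdy ω)) z
      = pdx ω z * (-(((deriv g z.im : ℝ) : ℂ) * Complex.sinh (ω z))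
          + ((g z.im : ℝ) : ℂ) ^ 2 * Complex.sinh (ω z) ^ 2)
        + pdx ω z * (pdy ω z) ^ 2 := by
    apply mul_left_cancel₀ (hcne z)
    linear_combination hXrel + pdx ω z * Complex.sinh (ω z) * hyyz
  have hYv : pdx (pdy (pdx ω)) z
      = pdy ω z * (-(((deriv f z.re : ℝ) : ℂ) * Complex.sinh (ω z))
          + ((f z.re : ℝ) : ℂ) ^ 2 * Complex.sinh (ω z) ^ 2)
        + pdy ω z * (pdx ω z) ^ 2 := by
    apply mul_left_cancel₀ (hcne z)
    linear_combination hYrel + pdy ω z * Complex.sinh (ω z) * hxxz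
  have hAv : pdx (pdx (pdx ω)) z
      = -((Complex.cosh (ω z) ^ 2 + Complex.sinh (ω z) ^ 2) * pdx ω z)
        - pdx (pdy (pdy ω)) z := by linear_combination hAX
  have hDv : pdy (pdy (pdy ω)) z
      = -((Complex.cosh (ω z) ^ 2 + Complex.sinh (ω z) ^ 2) * pdy ω z)
        - pdx (pdy (pdx ω)) z := by linear_combination hDY
  -- expansion of pdz³
  have E1x : ∀ w, pdx (pdz ω) w = (pdx (pdx ω) w - Complex.I * pdx (pdy ω) w) / 2 := by
    intro w
    show fderiv ℝ (pdz ω) w 1 = _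
    rw [show pdz ω = fun t => (pdx ω t - Complex.I * pdy ω t) / 2 from rfl]
    exact comb2 (dd _ hpx w) (dd _ hpy w)
  have E1y : ∀ w, pdy (pdz ω) w = (pdy (pdx ω) w - Complex.I * pdy (pdy ω) w) / 2 := by
    intro w
    show fderiv ℝ (pdz ω) w Complex.I = _
    rw [show pdz ω = fun t => (pdx ω t - Complex.I * pdy ω t) / 2 from rfl]
    exact comb2 (dd _ hpx w) (dd _ hpy w)
  have hImulI : Complex.I * Complex.I = -1 := Complex.I_mul_I
  have E2 : ∀ w, pdz (pdz ω) w = (pdx (pdx ω) w - Complex.I * pdx (pdy ω) w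
      - Complex.I * pdy (pdx ω) w - pdy (pdy ω) w) / 4 := by
    intro w
    show (pdx (pdz ω) w - Complex.I * pdy (pdz ω) w) / 2 = _
    rw [E1x w, E1y w]
    linear_combination (pdy (pdy ω) w / 4) * hImulI
  have hx4 : pdx (pdz (pdz ω)) z = (pdx (pdx (pdx ω)) z - Complex.I * pdx (pdx (pdy ω)) z
      - Complex.I * pdx (pdy (pdx ω)) z - pdx (pdy (pdy ω)) z) / 4 := by
    show fderiv ℝ (pdz (pdz ω)) z 1 = _
    rw [show pdz (pdz ω) = fun w => (pdx (pdx ω) w - Complex.I * pdx (pdy ω) w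
      - Complex.I * pdy (pdx ω) w - pdy (pdy ω) w) / 4 from funext E2]
    exact comb4 (dd _ hpxx z) (dd _ hpxy z) (dd _ hpyx z) (dd _ hpyy z)
  have hy4 : pdy (pdz (pdz ω)) z = (pdy (pdx (pdx ω)) z - Complex.I * pdy (pdx (pdy ω)) z
      - Complex.I * pdy (pdy (pdx ω)) z - pdy (pdy (pdy ω)) z) / 4 := by
    show fderiv ℝ (pdz (pdz ω)) z Complex.I = _
    rw [show pdz (pdz ω) = fun w => (pdx (pdx ω) w - Complex.I * pdx (pdy ω) w
      - Complex.I * pdy (pdx ω) w - pdy (pdy ω) w) / 4 from funext E2]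
    exact comb4 (dd _ hpxx z) (dd _ hpxy z) (dd _ hpyx z) (dd _ hpyy z)
  have hzzz : pdz (pdz (pdz ω)) z = (pdx (pdx (pdx ω)) z
      - 3 * Complex.I * pdx (pdy (pdx ω)) z - 3 * pdx (pdy (pdy ω)) z
      + Complex.I * pdy (pdy (pdy ω)) z) / 8 := by
    show (pdx (pdz (pdz ω)) z - Complex.I * pdy (pdz (pdz ω)) z) / 2 = _
    rw [hx4, hy4, hxxy, comm_xx, hXcan1, hXcan2]
    linear_combination (pdx (pdy (pdy ω)) z / 4) * hImulI
  -- scalar identities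
  have hden : (1 : ℂ) + ((f z.re : ℝ) : ℂ) ^ 2 + ((g z.im : ℝ) : ℂ) ^ 2 ≠ 0 := by
    have e : ((1 + (f z.re) ^ 2 + (g z.im) ^ 2 : ℝ) : ℂ)
        = 1 + ((f z.re : ℝ) : ℂ) ^ 2 + ((g z.im : ℝ) : ℂ) ^ 2 := by push_cast; ring
    rw [← e]
    exact_mod_cast (by positivity : (1 + (f z.re) ^ 2 + (g z.im) ^ 2 : ℝ) ≠ 0)
  have hs2 : Complex.sinh (ω z) * (1 + ((f z.re : ℝ) : ℂ) ^ 2 + ((g z.im : ℝ) : ℂ) ^ 2)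
      = ((deriv f z.re : ℝ) : ℂ) + ((deriv g z.im : ℝ) : ℂ) := by
    have h := hsinh z
    push_cast at h
    field_simp [hden] at h
    linear_combination h
  have hfode' : ((deriv f z.re : ℝ) : ℂ) ^ 2
      = -(((f z.re : ℝ) : ℂ) ^ 4 + (1 + (c : ℂ) - (d : ℂ)) * ((f z.re : ℝ) : ℂ) ^ 2 + (c : ℂ)) := by
    have h := congrArg (fun r : ℝ => (r : ℂ)) (hfode z.re)
    push_cast at h
    linear_combination -h
  have hgode' : ((deriv g z.im : ℝ) : ℂ) ^ 2
      = -(((g z.im : ℝ) : ℂ) ^ 4 + (1 + (d : ℂ) - (c : ℂ)) * ((g z.im : ℝ) : ℂ) ^ 2 + (d : ℂ)) := by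
    have h := congrArg (fun r : ℝ => (r : ℂ)) (hgode z.im)
    push_cast at h
    linear_combination -h
  have hkey : Complex.sinh (ω z) * (((deriv f z.re : ℝ) : ℂ) - ((deriv g z.im : ℝ) : ℂ))
      = -(((f z.re : ℝ) : ℂ) ^ 2 - ((g z.im : ℝ) : ℂ) ^ 2) - ((c : ℂ) - (d : ℂ)) := by
    apply mul_left_cancel₀ hden
    linear_combination (((deriv f z.re : ℝ) : ℂ) - ((deriv g z.im : ℝ) : ℂ)) * hs2
      + hfode' - hgode'
  have hcosh2 : Complex.cosh (ω z) ^ 2 = Complex.sinh (ω z) ^ 2 + 1 := Complex.cosh_sq (ω z)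
  -- final assembly
  rw [hzzz, show pdz ω z = (pdx ω z - Complex.I * pdy ω z) / 2 from rfl,
    show pdzbar ω z = (pdx ω z + Complex.I * pdy ω z) / 2 from rfl,
    hAv, hDv, hXv, hYv, hpfun z, hqfun z]
  linear_combination
    ((1 : ℂ) / 8 * (-(((f z.re : ℝ) : ℂ) * Complex.cosh (ω z))
        * (2 * ((g z.im : ℝ) : ℂ) ^ 2 - 2 * ((f z.re : ℝ) : ℂ) ^ 2 - 1)
      - Complex.I * ((g z.im : ℝ) : ℂ) * Complex.cosh (ω z)
        * (2 * ((f z.re : ℝ) : ℂ) ^ 2 - 2 * ((g z.im : ℝ) : ℂ) ^ 2 - 1))) * hcosh2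
    + (Complex.sinh (ω z) / 4 * (((f z.re : ℝ) : ℂ) * Complex.cosh (ω z)
        + Complex.I * ((g z.im : ℝ) : ℂ) * Complex.cosh (ω z))) * hs2
    + ((((f z.re : ℝ) : ℂ) * Complex.cosh (ω z)
        - Complex.I * ((g z.im : ℝ) : ℂ) * Complex.cosh (ω z)) / 4) * hkey
    + ((3 : ℂ) / 4 * ((f z.re : ℝ) : ℂ) * ((g z.im : ℝ) : ℂ) ^ 2 * Complex.cosh (ω z) ^ 3
        - 1 / 4 * ((g z.im : ℝ) : ℂ) ^ 3 * Complex.cosh (ω z) ^ 3 * Complex.I) * hImulI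
end

section
/- Let f₀, g₀ be real numbers and define a(λ) = a₀ + a₁λ + a₂λ² + a₃λ³ + a₄λ⁴ with a₀ = a₄ = 1/16, a₁ = a₃ = (f₀² - g₀²)/4, a₂ = -1/8 - g₀²/2 - f₀²/2 - f₀²g₀². Then the four roots of a are -1 - 2f₀² ± 2√(f₀² + f₀⁴) and 1 + 2g₀² ± 2√(g₀² + g₀⁴), all real, and a satisfies the symmetry λ⁴ a(1/λ) = a(λ). -/
open Complex

/-- the symmetric genus-two spectral polynomial with coefficients
`a₀ = a₄ = 1/16`, `a₁ = a₃ = (f₀² - g₀²)/4`,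
`a₂ = -1/8 - g₀²/2 - f₀²/2 - f₀²g₀²` has the four real roots
`-1 - 2f₀² ± 2√(f₀² + f₀⁴)` and `1 + 2g₀² ± 2√(g₀² + g₀⁴)`, and satisfies the
symmetry `λ⁴ a(1/λ) = a(λ)`. -/
theorem stmt_19 (f₀ g₀ : ℝ) (a : ℂ → ℂ)
    (ha : ∀ l : ℂ, a l = ((1 / 16 : ℝ) : ℂ)
      + (((f₀ ^ 2 - g₀ ^ 2) / 4 : ℝ) : ℂ) * l
      + ((-1 / 8 - g₀ ^ 2 / 2 - f₀ ^ 2 / 2 - f₀ ^ 2 * g₀ ^ 2 : ℝ) : ℂ) * l ^ 2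
      + (((f₀ ^ 2 - g₀ ^ 2) / 4 : ℝ) : ℂ) * l ^ 3
      + ((1 / 16 : ℝ) : ℂ) * l ^ 4) :
    (∀ l : ℂ, a l = 0 ↔
      l = ((-1 - 2 * f₀ ^ 2 + 2 * Real.sqrt (f₀ ^ 2 + f₀ ^ 4) : ℝ) : ℂ) ∨
      l = ((-1 - 2 * f₀ ^ 2 - 2 * Real.sqrt (f₀ ^ 2 + f₀ ^ 4) : ℝ) : ℂ) ∨
      l = ((1 + 2 * g₀ ^ 2 + 2 * Real.sqrt (g₀ ^ 2 + g₀ ^ 4) : ℝ) : ℂ) ∨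
      l = ((1 + 2 * g₀ ^ 2 - 2 * Real.sqrt (g₀ ^ 2 + g₀ ^ 4) : ℝ) : ℂ)) ∧
    (∀ l : ℂ, l ≠ 0 → l ^ 4 * a (1 / l) = a l) := by
  have hsR : (Real.sqrt (f₀ ^ 2 + f₀ ^ 4)) ^ 2 = f₀ ^ 2 + f₀ ^ 4 :=
    Real.sq_sqrt (by positivity)
  have htR : (Real.sqrt (g₀ ^ 2 + g₀ ^ 4)) ^ 2 = g₀ ^ 2 + g₀ ^ 4 :=
    Real.sq_sqrt (by positivity)
  have hs : ((Real.sqrt (f₀ ^ 2 + f₀ ^ 4) : ℝ) : ℂ) ^ 2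
      = (f₀ : ℂ) ^ 2 + (f₀ : ℂ) ^ 4 := by exact_mod_cast congrArg (Complex.ofReal) hsR
  have ht : ((Real.sqrt (g₀ ^ 2 + g₀ ^ 4) : ℝ) : ℂ) ^ 2
      = (g₀ : ℂ) ^ 2 + (g₀ : ℂ) ^ 4 := by exact_mod_cast congrArg (Complex.ofReal) htR
  set s : ℂ := ((Real.sqrt (f₀ ^ 2 + f₀ ^ 4) : ℝ) : ℂ) with hsdef
  set t : ℂ := ((Real.sqrt (g₀ ^ 2 + g₀ ^ 4) : ℝ) : ℂ) with htdef
  have key : ∀ l : ℂ, a l = (1 / 16 : ℂ) *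
      ((l - (-1 - 2 * (f₀ : ℂ) ^ 2 + 2 * s)) * (l - (-1 - 2 * (f₀ : ℂ) ^ 2 - 2 * s)) *
       ((l - (1 + 2 * (g₀ : ℂ) ^ 2 + 2 * t)) * (l - (1 + 2 * (g₀ : ℂ) ^ 2 - 2 * t)))) := by
    intro l
    rw [ha l]
    push_cast
    linear_combination ((l - (1 + 2 * (g₀ : ℂ) ^ 2 + 2 * t)) *
        (l - (1 + 2 * (g₀ : ℂ) ^ 2 - 2 * t)) / 4) * hs +
      ((l ^ 2 + (2 + 4 * (f₀ : ℂ) ^ 2) * l + 1) / 4) * ht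
  constructor
  · intro l
    rw [key l]
    constructor
    · intro h
      rcases mul_eq_zero.1 h with h | h
      · norm_num at h
      rcases mul_eq_zero.1 h with h | h
      · rcases mul_eq_zero.1 h with h | h
        · left; rw [sub_eq_zero] at h; rw [h]; push_cast; ring
        · right; left; rw [sub_eq_zero] at h; rw [h]; push_cast; ring
      · rcases mul_eq_zero.1 h with h | h
        · right; right; left; rw [sub_eq_zero] at h; rw [h]; push_cast; ring
        · right; right; right; rw [sub_eq_zero] at h; rw [h]; push_cast; ring
    · rintro (h | h | h | h) <;> (rw [h]; push_cast; ring)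
  · intro l hl
    rw [ha l, ha (1 / l)]
    push_cast
    rw [one_div]
    have h1 : l * l⁻¹ = 1 := mul_inv_cancel₀ hl
    linear_combination (((f₀:ℂ)^2 - (g₀:ℂ)^2)/4 * l^3
      + (-1/8 - (g₀:ℂ)^2/2 - (f₀:ℂ)^2/2 - (f₀:ℂ)^2*(g₀:ℂ)^2) * l^2 * (l*l⁻¹ + 1)
      + ((f₀:ℂ)^2 - (g₀:ℂ)^2)/4 * l * ((l*l⁻¹)^2 + l*l⁻¹ + 1)
      + (1/16 : ℂ) * ((l*l⁻¹)^3 + (l*l⁻¹)^2 + l*l⁻¹ + 1)) * h1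
end
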